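/- arXiv:1801.02370 — 5 statements merged into one kernel-verified Lean document; each statement's English description precedes it below -/
import Mathlib

section
/- Let Δ be an integer at least 2 and let G be a finite, connected graph of maximum degree at most Δ. Then the cat can localize a 4Δ-slow mouse up to distance 0 on G; that is, there is a strategy σ such that for every 4Δ-slow game in which the cat follows σ there is some i ≥ 1 with rad_G(M_i) ≤ 0 (equivalently, M_i = {m_i}). -/
open SimpleGraph

/-- A `k`-slow mouse walk on `G` (0-indexed time): each position belongs to the
closed neighborhood of the previous one, and the mouse may only move at time
steps `i` with `(i − 1) ≡ 0 (mod k)` (in 1-indexed terms). -/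
def IsSlowMouseWalk {V : Type*} (G : SimpleGraph V) (k : ℕ) (m : ℕ → V) : Prop :=
  (∀ i : ℕ, m (i + 1) = m i ∨ G.Adj (m i) (m (i + 1))) ∧
    ∀ i : ℕ, ¬ k ∣ (i + 1) → m (i + 1) = m i

/-- The bit the cat learns in (0-indexed) round `i ≥ 1`:
`true` iff `dist(cᵢ, mᵢ) ≤ dist(cᵢ₋₁, mᵢ₋₁)`. -/
noncomputable def gameBit {V : Type*} (G : SimpleGraph V) (c m : ℕ → V) (i : ℕ) : Bool :=
  decide (G.dist (c i) (m i) ≤ G.dist (c (i - 1)) (m (i - 1)))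

/-- The cat follows the strategy `(c₁, c₂; f)`: its first two probes are `c₁, c₂`,
and every later probe is determined by `f` applied to the bits learned so far. -/
def FollowsStrategy {V : Type*} (G : SimpleGraph V) (c m : ℕ → V)
    (c₁ c₂ : V) (f : (n : ℕ) → (Fin n → Bool) → V) : Prop :=
  c 0 = c₁ ∧ c 1 = c₂ ∧
    ∀ i : ℕ, c (i + 2) = f (i + 1) (fun j => gameBit G c m (j.val + 1))

/-- The set `Mᵢ` of possible positions of a `k`-slow mouse consistent with the
information available to the cat after (0-indexed) round `i`. -/
def slowMouseSet {V : Type*} (G : SimpleGraph V) (k : ℕ) (c m : ℕ → V) (i : ℕ) : Set V :=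
  {u | ∃ mt : ℕ → V, mt i = u ∧
    (∀ j : ℕ, j < i → (mt (j + 1) = mt j ∨ G.Adj (mt j) (mt (j + 1)))) ∧
    (∀ j : ℕ, j < i → ¬ k ∣ (j + 1) → mt (j + 1) = mt j) ∧
    ∀ j : ℕ, 1 ≤ j → j ≤ i →
      ((G.dist (c j) (mt j) ≤ G.dist (c (j - 1)) (mt (j - 1))) ↔ gameBit G c m j = true)}

/-- The cat can localize a `k`-slow mouse up to distance `d` on `G`: there is a
strategy such that in every `k`-slow game in which the cat follows it, at some
round `i` the set `Mᵢ` has radius at most `d`. -/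
def CanLocalizeSlow {V : Type*} (G : SimpleGraph V) (k d : ℕ) : Prop :=
  ∃ (c₁ c₂ : V) (f : (n : ℕ) → (Fin n → Bool) → V),
    ∀ m c : ℕ → V, IsSlowMouseWalk G k m → FollowsStrategy G c m c₁ c₂ f →
      ∃ i : ℕ, ∃ u : V, ∀ x ∈ slowMouseSet G k c m i, G.dist u x ≤ d

/-!
The cat plays in blocks of `4 Δ` rounds, during which the mouse cannot move, around a base `u`.
Probing `a` right after `y` tells whether `y` is strictly closer to the mouse than `a`. In the first
`2 Δ + 1` rounds of a block the cat thus learns which neighbours of `u` are closer to the mouse, and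
in the remaining `2 Δ - 1` rounds which neighbours of the first such neighbour `w` are (`u` itself
is not). A position consistent with these answers has the same closer neighbours as the mouse, and
a vertex has no closer neighbour exactly when the mouse sits on it: so if the mouse is at `u` or at
`w`, the consistent positions collapse to it. Otherwise the next base, a closer neighbour of `w`, is
two steps closer to the mouse, which moves at most one step per block.
-/

theorem const_on_block {α : Type*} {f : ℕ → α} {k j R : ℕ} (hR : R < k)
    (hf : ∀ t < j * k + R, ¬ k ∣ t + 1 → f (t + 1) = f t) {r : ℕ} (hr : r ≤ R) :
    f (j * k + r) = f (j * k) := by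
  induction r with
  | zero => rfl
  | succ r ih =>
    have hndvd : ¬ k ∣ j * k + r + 1 := fun hdvd => by
      have := Nat.le_of_dvd r.succ_pos ((Nat.dvd_add_right (dvd_mul_left k j)).mp hdvd)
      omega
    rw [← add_assoc, hf _ (by omega) hndvd, ih (by omega)]

theorem IsSlowMouseWalk.dist_block_le_one {V : Type*} {G : SimpleGraph V} {k : ℕ} {m : ℕ → V}
    (hm : IsSlowMouseWalk G k m) (hk : 0 < k) (j : ℕ) :
    G.dist (m (j * k)) (m ((j + 1) * k)) ≤ 1 := by
  have hconst : m (j * k + (k - 1)) = m (j * k) :=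
    const_on_block (by omega) (fun t _ => hm.2 t) le_rfl
  rw [show (j + 1) * k = j * k + (k - 1) + 1 by rw [add_mul, one_mul]; omega, ← hconst]
  rcases hm.1 (j * k + (k - 1)) with h | h
  · simp [h]
  · exact (dist_eq_one_iff_adj.mpr h).le

namespace SimpleGraph

variable {V : Type*} {G : SimpleGraph V}

theorem Connected.exists_adj_dist_lt (hG : G.Connected) {u v : V} (h : u ≠ v) :
    ∃ w, G.Adj u w ∧ G.dist w v < G.dist u v := by
  obtain ⟨p, hp⟩ := hG.exists_walk_length_eq_dist u v
  cases p with
  | nil => exact absurd rfl h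
  | @cons _ w _ hadj q =>
    refine ⟨w, hadj, ?_⟩
    have := dist_le q
    rw [Walk.length_cons] at hp
    omega

theorem Connected.forall_adj_not_dist_lt_iff (hG : G.Connected) {u v : V} :
    (∀ w, G.Adj u w → ¬ G.dist w v < G.dist u v) ↔ v = u := by
  refine ⟨fun h => ?_, fun h w _ => by simp [h]⟩
  by_contra hvu
  obtain ⟨w, hadj, hlt⟩ := hG.exists_adj_dist_lt (Ne.symm hvu)
  exact h w hadj hlt

end SimpleGraph

namespace CatAndMouse

open SimpleGraph

noncomputable section

variable {V : Type*} (G : SimpleGraph V)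

def starProbe (a : V) (L : List V) (r : ℕ) : V :=
  if r % 2 = 0 then a else L.getD (r / 2) a

/-- The bit of round `T + 2 i + 2` of a star probe from time `T` is `false` exactly when `L[i]` is
strictly closer to the mouse than the centre (see `StarRun.flag_iff`); this picks the first such. -/
def starScan (L : List V) (β : ℕ → Bool) (T : ℕ) : Option V :=
  ((List.finRange L.length).find? fun i : Fin L.length => !β (T + 2 * i + 2)).map L.get

def StarRun (p : ℕ → V) (β : ℕ → Bool) (x a : V) (L : List V) (T : ℕ) : Prop :=
  (∀ r ≤ 2 * L.length, p (T + r) = starProbe a L r) ∧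
    ∀ r, T < r → r ≤ T + 2 * L.length → (β r = true ↔ G.dist (p r) x ≤ G.dist (p (r - 1)) x)

section StarScan

variable {G} {p : ℕ → V} {β β' : ℕ → Bool} {a x : V} {L : List V} {T : ℕ}

theorem StarRun.flag_iff (h : StarRun G p β x a L T) (i : Fin L.length) :
    (!β (T + 2 * i + 2)) = true ↔ G.dist (L.get i) x < G.dist a x := by
  have hi := i.isLt
  have hcentre : p (T + 2 * i + 2) = a := by
    rw [show T + 2 * i + 2 = T + (2 * i + 2) by omega, h.1 _ (by omega), starProbe,
      if_pos (by omega)]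
  have hleaf : p (T + 2 * i + 2 - 1) = L.get i := by
    rw [show T + 2 * i + 2 - 1 = T + (2 * i + 1) by omega, h.1 _ (by omega), starProbe,
      if_neg (by omega), show (2 * i.1 + 1) / 2 = i by omega, List.getD_eq_getElem _ _ hi,
      List.get_eq_getElem]
  rw [Bool.not_eq_true', ← Bool.not_eq_true, h.2 _ (by omega) (by omega), hcentre, hleaf, not_le]

theorem StarRun.starScan_eq_none_iff (h : StarRun G p β x a L T) :
    starScan L β T = none ↔ ∀ y ∈ L, ¬ G.dist y x < G.dist a x := by
  simp only [starScan, Option.map_eq_none_iff, List.find?_eq_none, h.flag_iff]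
  exact ⟨fun h y hy => by obtain ⟨i, rfl⟩ := List.mem_iff_get.mp hy; exact h i (List.mem_finRange i),
    fun h i _ => h _ (List.get_mem L i)⟩

theorem StarRun.dist_lt_of_starScan_eq_some (h : StarRun G p β x a L T) {y : V}
    (hy : starScan L β T = some y) : G.dist y x < G.dist a x := by
  obtain ⟨i, hi, rfl⟩ := Option.map_eq_some_iff.mp hy
  exact (h.flag_iff i).mp (List.find?_some hi :)

theorem mem_of_starScan_eq_some {y : V} (h : starScan L β T = some y) : y ∈ L := by
  obtain ⟨i, -, rfl⟩ := Option.map_eq_some_iff.mp h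
  exact List.get_mem L i

theorem starScan_congr (h : ∀ r, T < r → r ≤ T + 2 * L.length → β r = β' r) :
    starScan L β T = starScan L β' T := by
  unfold starScan
  congr 2
  funext i
  rw [h _ (by omega) (by omega)]

end StarScan

variable [G.LocallyFinite]

def nbrs (u : V) : List V := (G.neighborFinset u).toList

def closerNbr (u : V) (β : ℕ → Bool) : Option V := starScan (nbrs G u) β 0

section Neighbours

variable {G} {u v w : V} {β β' : ℕ → Bool}

theorem mem_nbrs : v ∈ nbrs G u ↔ G.Adj u v := by
  simp [nbrs]

theorem length_nbrs : (nbrs G u).length = G.degree u := by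
  simp [nbrs]

theorem adj_of_closerNbr_eq_some (h : closerNbr G u β = some w) : G.Adj u w :=
  mem_nbrs.mp (mem_of_starScan_eq_some h)

theorem closerNbr_congr {Δ : ℕ} (hdeg : ∀ v, G.degree v ≤ Δ)
    (h : ∀ r, 0 < r → r ≤ 2 * Δ → β r = β' r) : closerNbr G u β = closerNbr G u β' := by
  have hlen : (nbrs G u).length ≤ Δ := length_nbrs.trans_le (hdeg u)
  exact starScan_congr fun r hr hrR => h r hr (by omega)

end Neighbours

variable [DecidableEq V] (Δ : ℕ)

def outerNbrs (u w : V) : List V := ((G.neighborFinset w).erase u).toList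

def closerOuterNbr (u w : V) (β : ℕ → Bool) : Option V := starScan (outerNbrs G u w) β (2 * Δ + 1)

def blockProbe (u : V) (β : ℕ → Bool) (r : ℕ) : V :=
  if r ≤ 2 * Δ then starProbe u (nbrs G u) r
  else match closerNbr G u β with
    | none => u
    | some w => starProbe w (outerNbrs G u w) (r - (2 * Δ + 1))

def nextBase (u : V) (β : ℕ → Bool) : V :=
  match closerNbr G u β with
  | none => u
  | some w => (closerOuterNbr G Δ u w β).getD w

/-- The bits `β` of a block with base `u` are, up to offset `R`, those of a mouse sitting at `x`. -/
def Consistent (u : V) (β : ℕ → Bool) (x : V) (R : ℕ) : Prop :=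
  ∀ r, 0 < r → r ≤ R →
    (β r = true ↔ G.dist (blockProbe G Δ u β r) x ≤ G.dist (blockProbe G Δ u β (r - 1)) x)

variable {G Δ} {u v w x : V} {β β' : ℕ → Bool}

theorem mem_outerNbrs : v ∈ outerNbrs G u w ↔ v ≠ u ∧ G.Adj w v := by
  simp [outerNbrs]

theorem length_outerNbrs (h : G.Adj u w) : (outerNbrs G u w).length = G.degree w - 1 := by
  simp [outerNbrs, Finset.card_erase_of_mem ((mem_neighborFinset G w u).mpr h.symm)]

theorem blockProbe_of_le {r : ℕ} (hr : r ≤ 2 * Δ) :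
    blockProbe G Δ u β r = starProbe u (nbrs G u) r :=
  if_pos hr

theorem blockProbe_of_closerNbr_eq_some (hw : closerNbr G u β = some w) {r : ℕ} (hr : 2 * Δ < r) :
    blockProbe G Δ u β r = starProbe w (outerNbrs G u w) (r - (2 * Δ + 1)) := by
  simp only [blockProbe, if_neg (not_le.mpr hr), hw]

theorem Consistent.mono {R R' : ℕ} (h : Consistent G Δ u β x R) (hR : R' ≤ R) :
    Consistent G Δ u β x R' :=
  fun r hr hrR => h r hr (hR.trans' hrR)

theorem length_outerNbrs_lt (hdeg : ∀ v, G.degree v ≤ Δ) (hadj : G.Adj u w) :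
    (outerNbrs G u w).length < Δ := by
  have := hdeg w
  have := (G.degree_pos_iff_exists_adj w).mpr ⟨u, hadj.symm⟩
  rw [length_outerNbrs hadj]
  omega

theorem Consistent.starRun_nbrs (hdeg : ∀ v, G.degree v ≤ Δ)
    (hx : Consistent G Δ u β x (2 * Δ)) : StarRun G (blockProbe G Δ u β) β x u (nbrs G u) 0 := by
  have hlen : (nbrs G u).length ≤ Δ := length_nbrs.trans_le (hdeg u)
  exact ⟨fun r hr => by rw [zero_add, blockProbe_of_le (by omega)],
    fun r hr hrR => hx r hr (by omega)⟩

theorem Consistent.starRun_outerNbrs (hdeg : ∀ v, G.degree v ≤ Δ)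
    (hw : closerNbr G u β = some w) (hx : Consistent G Δ u β x (4 * Δ - 1)) :
    StarRun G (blockProbe G Δ u β) β x w (outerNbrs G u w) (2 * Δ + 1) := by
  have hlen := length_outerNbrs_lt hdeg (adj_of_closerNbr_eq_some hw)
  refine ⟨fun r hr => ?_, fun r hr hrR => hx r (by omega) (by omega)⟩
  rw [blockProbe_of_closerNbr_eq_some hw (by omega), Nat.add_sub_cancel_left]

theorem closerNbr_eq_none_iff (hG : G.Connected) (hdeg : ∀ v, G.degree v ≤ Δ)
    (hx : Consistent G Δ u β x (2 * Δ)) : closerNbr G u β = none ↔ x = u := by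
  rw [closerNbr, (hx.starRun_nbrs hdeg).starScan_eq_none_iff, ← hG.forall_adj_not_dist_lt_iff]
  simp only [mem_nbrs]

theorem dist_closerNbr_lt (hdeg : ∀ v, G.degree v ≤ Δ) (hx : Consistent G Δ u β x (2 * Δ))
    (hw : closerNbr G u β = some w) : G.dist w x < G.dist u x :=
  (hx.starRun_nbrs hdeg).dist_lt_of_starScan_eq_some hw

theorem closerOuterNbr_eq_none_iff (hG : G.Connected) (hdeg : ∀ v, G.degree v ≤ Δ)
    (hw : closerNbr G u β = some w) (hx : Consistent G Δ u β x (4 * Δ - 1)) :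
    closerOuterNbr G Δ u w β = none ↔ x = w := by
  have hwu := dist_closerNbr_lt hdeg (hx.mono (by omega)) hw
  rw [closerOuterNbr, (hx.starRun_outerNbrs hdeg hw).starScan_eq_none_iff,
    ← hG.forall_adj_not_dist_lt_iff]
  simp only [mem_outerNbrs, and_imp]
  refine ⟨fun h y hy => ?_, fun h y _ hy => h y hy⟩
  rcases eq_or_ne y u with rfl | hyu
  · omega
  · exact h y hyu hy

theorem dist_closerOuterNbr_lt (hdeg : ∀ v, G.degree v ≤ Δ) (hw : closerNbr G u β = some w)
    (hx : Consistent G Δ u β x (4 * Δ - 1)) {z : V} (hz : closerOuterNbr G Δ u w β = some z) :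
    G.dist z x < G.dist w x :=
  (hx.starRun_outerNbrs hdeg hw).dist_lt_of_starScan_eq_some hz

theorem localizes_or_approaches (hG : G.Connected) (hdeg : ∀ v, G.degree v ≤ Δ)
    (hv : Consistent G Δ u β v (4 * Δ - 1)) :
    (∃ R ≤ 4 * Δ - 1, ∀ x, Consistent G Δ u β x R → x = v) ∨
      G.dist (nextBase G Δ u β) v + 2 ≤ G.dist u v := by
  have hv₁ : Consistent G Δ u β v (2 * Δ) := hv.mono (by omega)
  by_cases hvu : v = u
  · refine .inl ⟨2 * Δ, by omega, fun x hx => ?_⟩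
    rw [hvu, ← closerNbr_eq_none_iff hG hdeg hx, closerNbr_eq_none_iff hG hdeg hv₁]
    exact hvu
  obtain ⟨w, hw⟩ := Option.ne_none_iff_exists'.mp ((closerNbr_eq_none_iff hG hdeg hv₁).not.mpr hvu)
  by_cases hvw : v = w
  · refine .inl ⟨4 * Δ - 1, le_rfl, fun x hx => ?_⟩
    rw [hvw, ← closerOuterNbr_eq_none_iff hG hdeg hw hx, closerOuterNbr_eq_none_iff hG hdeg hw hv]
    exact hvw
  obtain ⟨z, hz⟩ :=
    Option.ne_none_iff_exists'.mp ((closerOuterNbr_eq_none_iff hG hdeg hw hv).not.mpr hvw)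
  have hnext : nextBase G Δ u β = z := by simp only [nextBase, hw, hz, Option.getD_some]
  have h₁ := dist_closerNbr_lt hdeg hv₁ hw
  have h₂ := dist_closerOuterNbr_lt hdeg hw hv hz
  exact .inr (by rw [hnext]; omega)

theorem closerOuterNbr_congr (hdeg : ∀ v, G.degree v ≤ Δ) (hadj : G.Adj u w)
    (h : ∀ r, 2 * Δ < r → r < 4 * Δ → β r = β' r) :
    closerOuterNbr G Δ u w β = closerOuterNbr G Δ u w β' := by
  have hlen := length_outerNbrs_lt hdeg hadj
  exact starScan_congr fun r hr hrR => h r (by omega) (by omega)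

theorem blockProbe_congr (hdeg : ∀ v, G.degree v ≤ Δ) {r : ℕ}
    (h : ∀ s, 0 < s → s < r → β s = β' s) : blockProbe G Δ u β r = blockProbe G Δ u β' r := by
  unfold blockProbe
  split_ifs with hr
  · rfl
  · rw [closerNbr_congr hdeg fun s hs hsr => h s hs (by omega)]

theorem nextBase_congr (hdeg : ∀ v, G.degree v ≤ Δ) (h : ∀ r, 0 < r → r < 4 * Δ → β r = β' r) :
    nextBase G Δ u β = nextBase G Δ u β' := by
  unfold nextBase
  rw [closerNbr_congr hdeg fun r hr hrR => h r hr (by omega)]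
  cases hw : closerNbr G u β' with
  | none => rfl
  | some w =>
    exact congrArg (·.getD w)
      (closerOuterNbr_congr hdeg (adj_of_closerNbr_eq_some hw) fun r hr hrR => h r (by omega) hrR)

variable (G Δ) (v₀ : V)

def blockBits (b : ℕ → Bool) (j : ℕ) : ℕ → Bool := fun r => b (j * (4 * Δ) + r)

def base (b : ℕ → Bool) : ℕ → V
  | 0 => v₀
  | j + 1 => nextBase G Δ (base b j) (blockBits Δ b j)

def probe (b : ℕ → Bool) (t : ℕ) : V :=
  blockProbe G Δ (base G Δ v₀ b (t / (4 * Δ))) (blockBits Δ b (t / (4 * Δ))) (t % (4 * Δ))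

/-- `bits j` is the bit of round `j + 1`; round `0` has none. -/
def strategy (n : ℕ) (bits : Fin n → Bool) : V :=
  probe G Δ v₀ (fun i => if h : i - 1 < n then bits ⟨i - 1, h⟩ else true) (n + 1)

variable {G Δ v₀} {b b' : ℕ → Bool}

theorem probe_add {j r : ℕ} (hr : r < 4 * Δ) :
    probe G Δ v₀ b (j * (4 * Δ) + r) = blockProbe G Δ (base G Δ v₀ b j) (blockBits Δ b j) r := by
  have hk : 0 < 4 * Δ := by omega
  have hdiv : (j * (4 * Δ) + r) / (4 * Δ) = j := by
    rw [add_comm, Nat.add_mul_div_right _ _ hk, Nat.div_eq_of_lt hr, zero_add]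
  have hmod : (j * (4 * Δ) + r) % (4 * Δ) = r := by
    rw [add_comm, Nat.add_mul_mod_self_right, Nat.mod_eq_of_lt hr]
  rw [probe, hdiv, hmod]

theorem base_congr (hdeg : ∀ v, G.degree v ≤ Δ) {j : ℕ}
    (h : ∀ i, 0 < i → i < j * (4 * Δ) → b i = b' i) : base G Δ v₀ b j = base G Δ v₀ b' j := by
  induction j with
  | zero => rfl
  | succ j ih =>
    have hj : (j + 1) * (4 * Δ) = j * (4 * Δ) + 4 * Δ := by ring
    rw [base, base, ih fun i hi hij => h i hi (by omega)]
    exact nextBase_congr hdeg fun r hr hrk => h _ (by omega) (by omega)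

theorem probe_congr (hdeg : ∀ v, G.degree v ≤ Δ) {t : ℕ} (h : ∀ i, 0 < i → i < t → b i = b' i) :
    probe G Δ v₀ b t = probe G Δ v₀ b' t := by
  have ht : t / (4 * Δ) * (4 * Δ) + t % (4 * Δ) = t := Nat.div_add_mod' t _
  rw [probe, probe, base_congr hdeg fun i hi hit => h i hi (by omega)]
  exact blockProbe_congr hdeg fun s hs hst => h _ (by omega) (by omega)

theorem probe_eq_of_followsStrategy (hdeg : ∀ v, G.degree v ≤ Δ) {m c : ℕ → V} (b₀ : ℕ → Bool)
    (hc : FollowsStrategy G c m (probe G Δ v₀ b₀ 0) (probe G Δ v₀ b₀ 1) (strategy G Δ v₀))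
    (t : ℕ) : c t = probe G Δ v₀ (gameBit G c m) t := by
  obtain ⟨h₀, h₁, hc⟩ := hc
  match t with
  | 0 => exact h₀.trans (probe_congr hdeg fun i hi hit => absurd hit (by omega))
  | 1 => exact h₁.trans (probe_congr hdeg fun i hi hit => absurd hit (by omega))
  | i + 2 =>
    refine (hc i).trans (probe_congr hdeg fun s hs hsi => ?_)
    rw [dif_pos (by omega)]
    exact congrArg (gameBit G c m) (Nat.sub_add_cancel hs)

section Game

variable {m c : ℕ → V} {j R : ℕ}

theorem consistent_of_const_on_block (hc : ∀ t, c t = probe G Δ v₀ b t) (hR : R < 4 * Δ)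
    {f : ℕ → V} (hf : ∀ r ≤ R, f (j * (4 * Δ) + r) = f (j * (4 * Δ)))
    (hbits : ∀ t, j * (4 * Δ) < t → t ≤ j * (4 * Δ) + R →
      (b t = true ↔ G.dist (c t) (f t) ≤ G.dist (c (t - 1)) (f (t - 1)))) :
    Consistent G Δ (base G Δ v₀ b j) (blockBits Δ b j) (f (j * (4 * Δ))) R := by
  intro r hr hrR
  have h := hbits (j * (4 * Δ) + r) (by omega) (by omega)
  rwa [show j * (4 * Δ) + r - 1 = j * (4 * Δ) + (r - 1) by omega, hc, hc, probe_add (by omega),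
    probe_add (by omega), hf r hrR, hf (r - 1) (by omega)] at h

theorem consistent_of_isSlowMouseWalk (hΔ : 0 < Δ) (hm : IsSlowMouseWalk G (4 * Δ) m)
    (hc : ∀ t, c t = probe G Δ v₀ (gameBit G c m) t) (j : ℕ) :
    Consistent G Δ (base G Δ v₀ (gameBit G c m) j) (blockBits Δ (gameBit G c m) j)
      (m (j * (4 * Δ))) (4 * Δ - 1) :=
  consistent_of_const_on_block hc (by omega)
    (fun r hr => const_on_block (by omega) (fun t _ => hm.2 t) hr)
    (fun t _ _ => decide_eq_true_iff)

theorem consistent_of_mem_slowMouseSet (hc : ∀ t, c t = probe G Δ v₀ (gameBit G c m) t)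
    (hR : R < 4 * Δ) {x : V} (hx : x ∈ slowMouseSet G (4 * Δ) c m (j * (4 * Δ) + R)) :
    Consistent G Δ (base G Δ v₀ (gameBit G c m) j) (blockBits Δ (gameBit G c m) j) x R := by
  obtain ⟨mt, rfl, -, hslow, hbits⟩ := hx
  rw [const_on_block hR hslow le_rfl]
  exact consistent_of_const_on_block hc hR (fun r hr => const_on_block hR hslow hr)
    fun t ht htR => (hbits t (by omega) htR).symm

theorem exists_localized_of_dist_le (hG : G.Connected) (hΔ : 0 < Δ)
    (hdeg : ∀ v, G.degree v ≤ Δ) (hm : IsSlowMouseWalk G (4 * Δ) m)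
    (hc : ∀ t, c t = probe G Δ v₀ (gameBit G c m) t) (n j : ℕ)
    (hn : G.dist (base G Δ v₀ (gameBit G c m) j) (m (j * (4 * Δ))) ≤ n) :
    ∃ i u, ∀ x ∈ slowMouseSet G (4 * Δ) c m i, G.dist u x ≤ 0 := by
  induction n using Nat.strong_induction_on generalizing j with
  | _ n ih =>
    rcases localizes_or_approaches hG hdeg (consistent_of_isSlowMouseWalk hΔ hm hc j) with
      ⟨R, hR, hloc⟩ | happroach
    · refine ⟨j * (4 * Δ) + R, m (j * (4 * Δ)), fun x hx => ?_⟩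
      rw [hloc x (consistent_of_mem_slowMouseSet hc (by omega) hx), dist_self]
    · have hstep := hm.dist_block_le_one (by omega) j
      have htri := hG.dist_triangle (u := base G Δ v₀ (gameBit G c m) (j + 1))
        (v := m (j * (4 * Δ))) (w := m ((j + 1) * (4 * Δ)))
      exact ih (n - 1) (by omega) (j + 1) (by rw [base] at htri ⊢; omega)

end Game

end

end CatAndMouse

/-- If `Δ ≥ 2`, then the cat can localize a `4Δ`-slow mouse up to distance `0`
on every finite connected graph of maximum degree at most `Δ`. -/
theorem cat_localizes_slow_mouse {V : Type*} [Fintype V]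
    (G : SimpleGraph V) [DecidableRel G.Adj] (hG : G.Connected)
    (Δ : ℕ) (hΔ : 2 ≤ Δ) (hdeg : ∀ v : V, G.degree v ≤ Δ) :
    CanLocalizeSlow G (4 * Δ) 0 := by
  classical
  obtain ⟨v₀⟩ := hG.nonempty
  let b₀ : ℕ → Bool := fun _ => true
  refine ⟨CatAndMouse.probe G Δ v₀ b₀ 0, CatAndMouse.probe G Δ v₀ b₀ 1,
    CatAndMouse.strategy G Δ v₀, fun m c hm hc => ?_⟩
  exact CatAndMouse.exists_localized_of_dist_le hG (by omega) hdeg hm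
    (CatAndMouse.probe_eq_of_followsStrategy hdeg b₀ hc) _ 0 le_rfl
end

section
/- There is a constant C > 0 such that for every integer n ≥ 1, the cat can localize the mouse up to distance 2 within time C·(⌈log₂ n⌉ + 1) on the path P_n of order n, i.e., within time O(log n). -/
open SimpleGraph

/-- The mouse moves along edges of `G`: each position belongs to the closed
neighborhood of the previous one (0-indexed time). -/
def IsMouseWalk {V : Type*} (G : SimpleGraph V) (m : ℕ → V) : Prop :=
  ∀ i : ℕ, m (i + 1) = m i ∨ G.Adj (m i) (m (i + 1))

/-- The set `Mᵢ` of possible mouse positions consistent with the information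
available to the cat after (0-indexed) round `i`. -/
def mouseSet {V : Type*} (G : SimpleGraph V) (c m : ℕ → V) (i : ℕ) : Set V :=
  {u | ∃ mt : ℕ → V, mt i = u ∧
    (∀ j : ℕ, j < i → (mt (j + 1) = mt j ∨ G.Adj (mt j) (mt (j + 1)))) ∧
    ∀ j : ℕ, 1 ≤ j → j ≤ i →
      ((G.dist (c j) (mt j) ≤ G.dist (c (j - 1)) (mt (j - 1))) ↔ gameBit G c m j = true)}

/-- The cat can localize the mouse up to distance `d` within time `t` on `G`:
there is a strategy such that in every game in which the cat follows it, at some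
round `i ≤ t` the set `Mᵢ` has radius at most `d`  (i.e. some vertex `u` is within
distance `d` of every vertex of `Mᵢ`). -/
def CanLocalize {V : Type*} (G : SimpleGraph V) (d t : ℕ) : Prop :=
  ∃ (c₁ c₂ : V) (f : (n : ℕ) → (Fin n → Bool) → V),
    ∀ m c : ℕ → V, IsMouseWalk G m → FollowsStrategy G c m c₁ c₂ f →
      ∃ i : ℕ, i < t ∧ ∃ u : V, ∀ x ∈ mouseSet G c m i, G.dist u x ≤ d

/-!
The cat keeps an interval `[lo, hi]` known to contain the mouse and probes alternately just
right and just left of it. Comparing a probe with the previous one, made on the other side of the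
mouse, tells on which side of their midpoint the mouse now is, up to its one-step move. Hence
every two rounds halve the interval up to an additive constant, and after `2 ⌈log₂ n⌉` rounds it
has at most five vertices, all within distance `2` of its middle one.
-/

namespace SimpleGraph

theorem pathGraph_natDist_le_walk_length {n : ℕ} {u v : Fin n} (w : (pathGraph n).Walk u v) :
    Nat.dist u v ≤ w.length := by
  induction w with
  | nil => simp
  | cons h _ ih =>
    rw [pathGraph_adj] at h
    simp only [Walk.length_cons, Nat.dist] at ih ⊢
    omega

theorem pathGraph_dist_le_of_val_add {n : ℕ} (u v : Fin n) (k : ℕ) (h : (v : ℕ) = u + k) :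
    (pathGraph n).dist u v ≤ k := by
  induction k generalizing v with
  | zero => simp [Fin.ext (h.trans (add_zero _))]
  | succ k ih =>
    let w : Fin n := ⟨u + k, by omega⟩
    have hwv : (pathGraph n).Adj w v := pathGraph_adj.mpr (.inl (by simp only [w]; omega))
    calc (pathGraph n).dist u v ≤ (pathGraph n).dist u w + (pathGraph n).dist w v :=
          (pathGraph_preconnected n u w).dist_triangle_left v
      _ ≤ k + 1 := add_le_add (ih w rfl) (dist_eq_one_iff_adj.mpr hwv).le

theorem pathGraph_dist {n : ℕ} (u v : Fin n) : (pathGraph n).dist u v = Nat.dist u v := by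
  obtain ⟨w, hw⟩ := (pathGraph_preconnected n u v).exists_walk_length_eq_dist
  refine le_antisymm ?_ (hw ▸ pathGraph_natDist_le_walk_length w)
  rcases le_total (u : ℕ) v with huv | hvu
  · exact pathGraph_dist_le_of_val_add u v _ (by simp only [Nat.dist]; omega)
  · rw [dist_comm]
    exact pathGraph_dist_le_of_val_add v u _ (by simp only [Nat.dist]; omega)

theorem pathGraph_natDist_le_one_of_eq_or_adj {n : ℕ} {u v : Fin n}
    (h : v = u ∨ (pathGraph n).Adj u v) : Nat.dist u v ≤ 1 := by
  rcases h with rfl | h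
  · simp
  · rw [pathGraph_adj] at h
    simp only [Nat.dist]
    omega

end SimpleGraph

theorem CanLocalize.mono {V : Type*} {G : SimpleGraph V} {d t t' : ℕ} (h : CanLocalize G d t)
    (ht : t ≤ t') : CanLocalize G d t' := by
  obtain ⟨c₁, c₂, f, hf⟩ := h
  refine ⟨c₁, c₂, f, fun m c hm hc => ?_⟩
  obtain ⟨i, hi, hloc⟩ := hf m c hm hc
  exact ⟨i, hi.trans_le ht, hloc⟩

namespace PathSearch

/-- What the cat knows on the path with vertices `0, …, N`: the mouse lies in `[lo, hi]`, the
last probe was `last`, and the next probe is just right of the interval if `right`, else just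
left of it. -/
structure State where
  lo : ℕ
  hi : ℕ
  last : ℕ
  right : Bool

namespace State

instance : Membership ℕ State := ⟨fun s x => s.lo ≤ x ∧ x ≤ s.hi⟩

theorem mem_def {s : State} {x : ℕ} : x ∈ s ↔ s.lo ≤ x ∧ x ≤ s.hi := Iff.rfl

variable (N : ℕ)

/-- Truncated subtraction keeps the left probe `lo - 1` at vertex `0`. -/
def probe (s : State) : ℕ := if s.right then min (s.hi + 1) N else s.lo - 1

/-- With the probes `last` and `q` on opposite sides of the mouse, the answer to
`dist(q, y) ≤ dist(last, x)` for a move `x ↦ y` of at most one step tells on which side of the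
midpoint of `last` and `q` the new position `y` lies. -/
def update (s : State) (bit : Bool) : State :=
  let q := s.probe N
  match s.right, bit with
  | true, true => ⟨max (s.lo - 1) ((s.last + q) / 2), q, q, false⟩
  | true, false => ⟨s.lo - 1, min q ((s.last + q) / 2), q, false⟩
  | false, true => ⟨q, min (min (s.hi + 1) N) ((s.last + q + 1) / 2), q, true⟩
  | false, false => ⟨max q ((s.last + q + 1) / 2), min (s.hi + 1) N, q, true⟩

theorem update_last (s : State) (bit : Bool) : (s.update N bit).last = s.probe N := by
  unfold update; cases s.right <;> cases bit <;> rfl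

theorem update_right (s : State) (bit : Bool) : (s.update N bit).right = !s.right := by
  unfold update; cases s.right <;> cases bit <;> rfl

structure Valid (s : State) : Prop where
  lo_le : s.lo ≤ N
  hi_le : s.hi ≤ N
  last_le : s.last ≤ N
  last_le_lo : s.right = true → s.last ≤ s.lo
  hi_le_last : s.right = false → s.hi ≤ s.last

variable {N}

theorem Valid.probe_le {s : State} (hs : s.Valid N) : s.probe N ≤ N := by
  have := hs.lo_le
  unfold probe; split <;> omega

theorem Valid.update {s : State} (hs : s.Valid N) (bit : Bool) : (s.update N bit).Valid N := by
  obtain ⟨lo, hi, last, right⟩ := s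
  obtain ⟨h₁, h₂, h₃, h₄, h₅⟩ := hs
  cases right <;> cases bit <;> constructor <;>
    simp only [State.update, probe, ↓reduceIte, Bool.false_eq_true, Bool.true_eq_false,
      IsEmpty.forall_iff, forall_const] at * <;> omega

theorem mem_update {s : State} (hs : s.Valid N) {x y : ℕ} (hx : x ∈ s) (hy : y ≤ N)
    (hxy : Nat.dist x y ≤ 1) {bit : Bool}
    (hbit : Nat.dist (s.probe N) y ≤ Nat.dist s.last x ↔ bit = true) : y ∈ s.update N bit := by
  obtain ⟨lo, hi, last, right⟩ := s
  obtain ⟨h₁, h₂, h₃, h₄, h₅⟩ := hs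
  rw [mem_def] at hx ⊢
  cases right <;> cases bit <;>
    simp only [State.update, probe, ↓reduceIte, Bool.false_eq_true, Bool.true_eq_false,
      IsEmpty.forall_iff, forall_const, Nat.dist, iff_true, iff_false, not_le] at * <;> omega

/-- The second term is there because the last probe may lag behind `lo`, while the next cut is
made at the midpoint of `last` and `hi + 1`. -/
def potential (s : State) : ℕ := max (s.hi - s.lo) (s.hi - s.last - 2)

theorem potential_update_update_le {s : State} (hs : s.Valid N) (hright : s.right = true)
    (bit₁ bit₂ : Bool) :
    ((s.update N bit₁).update N bit₂).potential ≤ s.potential / 2 + 2 := by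
  obtain ⟨lo, hi, last, right⟩ := s
  obtain ⟨h₁, h₂, h₃, h₄, h₅⟩ := hs
  cases hright
  cases bit₁ <;> cases bit₂ <;>
    simp only [State.update, probe, ↓reduceIte, Bool.false_eq_true, Bool.true_eq_false,
      IsEmpty.forall_iff, forall_const, potential, sup_le_iff] at * <;> omega

end State

variable (N : ℕ)

def run (β : ℕ → Bool) : ℕ → State
  | 0 => ⟨0, N, 0, true⟩
  | k + 1 => (run β k).update N (β k)

theorem valid_run (β : ℕ → Bool) (k : ℕ) : (run N β k).Valid N := by
  induction k with
  | zero => exact ⟨Nat.zero_le _, le_rfl, Nat.zero_le _, fun _ => le_rfl, nofun⟩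
  | succ k ih => exact ih.update (β k)

theorem run_two_mul_right (β : ℕ → Bool) (J : ℕ) : (run N β (2 * J)).right = true := by
  induction J with
  | zero => rfl
  | succ J ih => simp [Nat.mul_succ, run, State.update_right, ih]

theorem run_congr {β β' : ℕ → Bool} {k : ℕ} (h : ∀ j < k, β j = β' j) :
    run N β k = run N β' k := by
  induction k with
  | zero => rfl
  | succ k ih => simp only [run, ih fun j hj => h j (by omega), h k (by omega)]

theorem potential_run_two_mul_le (β : ℕ → Bool) (J : ℕ) :
    (run N β (2 * J)).potential ≤ N / 2 ^ J + 4 := by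
  induction J with
  | zero => simp [run, State.potential]
  | succ J ih =>
    have hstep := State.potential_update_update_le (valid_run N β (2 * J))
      (run_two_mul_right N β J) (β (2 * J)) (β (2 * J + 1))
    have hdiv : N / 2 ^ (J + 1) = N / 2 ^ J / 2 := by rw [pow_succ, Nat.div_div_eq_div_mul]
    rw [Nat.mul_succ, hdiv]
    simp only [run] at hstep ⊢
    omega

theorem width_run_le_four (β : ℕ → Bool) :
    (run N β (2 * Nat.clog 2 (N + 1))).hi - (run N β (2 * Nat.clog 2 (N + 1))).lo ≤ 4 := by
  have hN : N < 2 ^ Nat.clog 2 (N + 1) := Nat.le_pow_clog one_lt_two _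
  have hpot := potential_run_two_mul_le N β (Nat.clog 2 (N + 1))
  rw [Nat.div_eq_of_lt hN] at hpot
  exact (le_max_left _ _).trans hpot

def strategy (k : ℕ) (bits : Fin k → Bool) : Fin (N + 1) :=
  Fin.ofNat (N + 1) ((run N (fun j => if h : j < k then bits ⟨j, h⟩ else false) k).probe N)

theorem val_strategy {β : ℕ → Bool} {k : ℕ} {bits : Fin k → Bool} (hbits : ∀ j, bits j = β j) :
    (strategy N k bits : ℕ) = (run N β k).probe N := by
  have hrun : run N (fun j => if h : j < k then bits ⟨j, h⟩ else false) k = run N β k :=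
    run_congr N fun j hj => by simp [hj, hbits]
  rw [strategy, hrun, Fin.val_ofNat,
    Nat.mod_eq_of_lt (Nat.lt_succ_of_le (valid_run N β k).probe_le)]

variable {N}

noncomputable def answers (c m : ℕ → Fin (N + 1)) (j : ℕ) : Bool :=
  gameBit (pathGraph (N + 1)) c m (j + 1)

theorem val_eq_last_of_followsStrategy {c m : ℕ → Fin (N + 1)}
    (hf : FollowsStrategy (pathGraph (N + 1)) c m 0 (strategy N 0 Fin.elim0) (strategy N))
    (k : ℕ) : (c k : ℕ) = (run N (answers c m) k).last := by
  cases k with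
  | zero => simp [hf.1, run]
  | succ k =>
    rw [run, State.update_last]
    cases k with
    | zero => rw [hf.2.1]; exact val_strategy N fun j => j.elim0
    | succ k => rw [hf.2.2 k]; exact val_strategy N fun _ => rfl

theorem val_mem_run_of_mem_mouseSet {c m : ℕ → Fin (N + 1)}
    (hc : ∀ k, (c k : ℕ) = (run N (answers c m) k).last)
    {i : ℕ} {x : Fin (N + 1)} (hx : x ∈ mouseSet (pathGraph (N + 1)) c m i) :
    (x : ℕ) ∈ run N (answers c m) i := by
  obtain ⟨mt, rfl, hwalk, hbits⟩ := hx
  suffices ∀ k ≤ i, (mt k : ℕ) ∈ run N (answers c m) k from this i le_rfl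
  intro k hk
  induction k with
  | zero => exact ⟨Nat.zero_le _, Nat.lt_succ_iff.mp (mt 0).isLt⟩
  | succ k ih =>
    have hbit := hbits (k + 1) (Nat.succ_pos k) hk
    rw [pathGraph_dist, pathGraph_dist, hc, hc, run, State.update_last,
      Nat.add_sub_cancel] at hbit
    exact State.mem_update (valid_run N _ k) (ih (by omega))
      (Nat.lt_succ_iff.mp (mt (k + 1)).isLt)
      (pathGraph_natDist_le_one_of_eq_or_adj (hwalk k hk)) hbit

end PathSearch

open PathSearch in
theorem canLocalize_pathGraph (N : ℕ) :
    CanLocalize (pathGraph (N + 1)) 2 (2 * Nat.clog 2 (N + 1) + 1) := by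
  refine ⟨0, strategy N 0 Fin.elim0, strategy N, fun m c _ hf => ?_⟩
  set s := run N (answers c m) (2 * Nat.clog 2 (N + 1))
  have hwidth : s.hi - s.lo ≤ 4 := width_run_le_four N _
  refine ⟨_, Nat.lt_succ_self _, ⟨min (s.lo + 2) N, by omega⟩, fun x hx => ?_⟩
  have hxs : (x : ℕ) ∈ s := val_mem_run_of_mem_mouseSet (val_eq_last_of_followsStrategy hf) hx
  rw [State.mem_def] at hxs
  rw [pathGraph_dist, Nat.dist, Fin.val_mk]
  omega

/-- There is a constant `C > 0` such that for every `n ≥ 1` the cat can localize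
the mouse up to distance `2` within time `C(⌈log₂ n⌉ + 1)` on the path `Pₙ`. -/
theorem cat_localizes_mouse_on_path :
    ∃ C : ℕ, 0 < C ∧ ∀ n : ℕ, 1 ≤ n →
      CanLocalize (SimpleGraph.pathGraph n) 2 (C * (Nat.clog 2 n + 1)) := by
  refine ⟨2, two_pos, fun n hn => ?_⟩
  obtain ⟨N, rfl⟩ := Nat.exists_eq_add_of_le' hn
  exact (canLocalize_pathGraph N).mono (by omega)
end

section
/- Let T be a finite tree, let u and w be two distinct vertices of T having a common neighbor v, and let m and m′ be vertices of T with m′ ∈ N_T[m]. If dist_T(w, m′) ≤ dist_T(u, m), then m′ belongs to the connected component of T − uv that contains v. -/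
/-!
Since `T` is a tree, for each edge `ab` the distances `dist(a, x)` and `dist(b, x)` differ by
exactly one, and the neighbour `b` of `a` with `dist(b, x) + 1 = dist(a, x)` is unique: it is
the second vertex of the unique path from `a` to `x`. If `m'` were on `u`'s side of `uv`, then
the geodesic from `v` to `m'` would start with `u`, hence the one from `w` would run through `v`
and `u`, giving `dist(w, m') = dist(u, m') + 2 > dist(u, m') + 1 ≥ dist(u, m)`.
-/

open SimpleGraph

namespace SimpleGraph

variable {V : Type*} {G : SimpleGraph V}

/-- A geodesic from `v` to `x` avoids `u` when `u` is farther from `x`, so it survives the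
deletion of the edge `uv`. -/
lemma reachable_deleteEdges_of_dist_lt_dist {u v x : V} (hvx : G.Reachable v x)
    (hlt : G.dist v x < G.dist u x) : (G.deleteEdges {s(u, v)}).Reachable v x := by
  classical
  obtain ⟨p, hp⟩ := hvx.exists_walk_length_eq_dist
  refine ⟨p.toDeleteEdges {s(u, v)} fun e he hmem => ?_⟩
  rw [Set.mem_singleton_iff] at hmem
  subst hmem
  have hu : u ∈ p.support := p.fst_mem_support_of_mem_edges he
  have : G.dist u x ≤ p.length :=
    (dist_le (p.dropUntil u hu)).trans (p.length_dropUntil_le_length hu)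
  omega

lemma IsAcyclic.eq_of_adj_of_dist_eq_dist_add_one (hG : G.IsAcyclic) {u v w x : V}
    (hvu : G.Adj v u) (hvw : G.Adj v w) (hu : G.dist v x = G.dist u x + 1)
    (hw : G.dist v x = G.dist w x + 1) : u = w := by
  have hvx : G.Reachable v x := Reachable.of_dist_ne_zero (by omega)
  obtain ⟨p, hp⟩ := (hvu.reachable.symm.trans hvx).exists_walk_length_eq_dist
  obtain ⟨q, hq⟩ := (hvw.reachable.symm.trans hvx).exists_walk_length_eq_dist
  have hpq : Walk.cons hvu p = Walk.cons hvw q := by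
    have hp' := (Walk.cons hvu p).isPath_of_length_eq_dist (by simp [hp, hu])
    have hq' := (Walk.cons hvw q).isPath_of_length_eq_dist (by simp [hq, hw])
    exact congrArg Subtype.val ((hG.subsingleton_path _ _).elim ⟨_, hp'⟩ ⟨_, hq'⟩)
  simpa using congrArg Walk.snd hpq

end SimpleGraph

theorem key_observation_le_general {V : Type*}
    (T : SimpleGraph V) (hT : T.IsTree) (u w v m m' : V) (huw : u ≠ w)
    (huv : T.Adj u v) (hwv : T.Adj w v)
    (hm' : m' = m ∨ T.Adj m m')
    (hdist : T.dist w m' ≤ T.dist u m) :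
    (T.deleteEdges {s(u, v)}).Reachable v m' := by
  refine reachable_deleteEdges_of_dist_lt_dist (hT.connected v m') ?_
  by_contra! hle
  have hv : T.dist v m' = T.dist u m' + 1 := by
    rcases hT.dist_eq_dist_add_one_of_adj m' huv with h | h <;>
      simp only [dist_comm (u := m')] at h <;> omega
  have hw : T.dist w m' = T.dist v m' + 1 := by
    rcases hT.dist_eq_dist_add_one_of_adj m' hwv with h | h <;>
      simp only [dist_comm (u := m')] at h
    · exact h
    · exact absurd (hT.isAcyclic.eq_of_adj_of_dist_eq_dist_add_one huv.symm hwv.symm hv h) huw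
  have hm : T.dist u m ≤ T.dist u m' + 1 := by
    rcases hm' with rfl | hadj
    · omega
    · rcases hadj.diff_dist_adj (u := u) with h | h | h <;> omega
  omega

/-- Let `u` and `w` be distinct vertices of a finite tree `T` with a common
neighbor `v`, and let `m' ∈ N[m]`. If `dist(w, m') ≤ dist(u, m)`, then `m'` lies
in the component of `T − uv` containing `v`. -/
theorem key_observation_le {V : Type*} [Fintype V]
    (T : SimpleGraph V) (hT : T.IsTree) (u w v m m' : V) (huw : u ≠ w)
    (huv : T.Adj u v) (hwv : T.Adj w v)
    (hm' : m' = m ∨ T.Adj m m')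
    (hdist : T.dist w m' ≤ T.dist u m) :
    (T.deleteEdges {s(u, v)}).Reachable v m' :=
  key_observation_le_general T hT u w v m m' huw huv hwv hm' hdist
end

section
/- Let T be a finite tree, let u and w be two distinct vertices of T having a common neighbor v, and let m and m′ be vertices of T with m′ ∈ N_T[m]. If dist_T(w, m′) > dist_T(u, m), then m′ belongs to the connected component of T − wv that contains v. -/
/-!
If `m'` were cut off from `v` by deleting `wv`, it would also be cut off from `u` (the edge `uv`
survives), so a shortest `u`–`m'` path passes through `w ≠ u`. Then
`dist(u, m') ≥ 1 + dist(w, m') > 1 + dist(u, m)`, contradicting the triangle inequality through `m`.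
-/

open SimpleGraph

namespace SimpleGraph

variable {V : Type*} {G : SimpleGraph V}

lemma Walk.dist_add_dist_le_length {u v x : V} (p : G.Walk u v) (hx : x ∈ p.support) :
    G.dist u x + G.dist x v ≤ p.length := by
  classical
  calc G.dist u x + G.dist x v ≤ (p.takeUntil x hx).length + (p.dropUntil x hx).length :=
        add_le_add (dist_le _) (dist_le _)
    _ = p.length := by rw [← Walk.length_append, p.take_spec hx]

/-- If the edge `xy` separates `a` from `b`, every shortest `a`–`b` walk passes through `x`. -/
lemma Connected.dist_add_dist_le_of_not_reachable_deleteEdges (hG : G.Connected) {a b x y : V}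
    (h : ¬(G.deleteEdges {s(x, y)}).Reachable a b) : G.dist a x + G.dist x b ≤ G.dist a b := by
  obtain ⟨p, hp⟩ := hG.exists_walk_length_eq_dist a b
  exact hp ▸ p.dist_add_dist_le_length
    (p.fst_mem_support_of_mem_edges (p.mem_edges_of_not_reachable_deleteEdges h))

lemma Adj.adj_deleteEdges_of_ne {u v w : V} (huv : G.Adj u v) (huw : u ≠ w) :
    (G.deleteEdges {s(w, v)}).Adj u v := by
  simp [deleteEdges_adj, huv, huw, huv.ne]

lemma dist_le_one_of_eq_or_adj {m m' : V} (h : m' = m ∨ G.Adj m m') : G.dist m m' ≤ 1 := by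
  rcases h with rfl | hadj
  · simp
  · exact (dist_eq_one_iff_adj.mpr hadj).le

end SimpleGraph

theorem key_observation_gt_general {V : Type*}
    (T : SimpleGraph V) (hT : T.IsTree) (u w v m m' : V) (huw : u ≠ w)
    (huv : T.Adj u v)
    (hm' : m' = m ∨ T.Adj m m')
    (hdist : T.dist w m' > T.dist u m) :
    (T.deleteEdges {s(w, v)}).Reachable v m' := by
  by_contra hvm'
  have hconn : T.Connected := hT.connected
  have hvu : (T.deleteEdges {s(w, v)}).Reachable v u :=
    (huv.adj_deleteEdges_of_ne huw).reachable.symm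
  have hthrough : T.dist u w + T.dist w m' ≤ T.dist u m' :=
    hconn.dist_add_dist_le_of_not_reachable_deleteEdges fun hum' ↦ hvm' (hvu.trans hum')
  have htriangle : T.dist u m' ≤ T.dist u m + T.dist m m' := hconn.dist_triangle
  have hmm' : T.dist m m' ≤ 1 := dist_le_one_of_eq_or_adj hm'
  have huw_pos : 0 < T.dist u w := hconn.pos_dist_of_ne huw
  omega

/-- Let `u` and `w` be distinct vertices of a finite tree `T` with a common
neighbor `v`, and let `m' ∈ N[m]`. If `dist(w, m') > dist(u, m)`, then `m'` lies
in the component of `T − wv` containing `v`. -/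
theorem key_observation_gt {V : Type*} [Fintype V]
    (T : SimpleGraph V) (hT : T.IsTree) (u w v m m' : V) (huw : u ≠ w)
    (huv : T.Adj u v) (hwv : T.Adj w v)
    (hm' : m' = m ∨ T.Adj m m')
    (hdist : T.dist w m' > T.dist u m) :
    (T.deleteEdges {s(w, v)}).Reachable v m' :=
  key_observation_gt_general T hT u w v m m' huw huv hm' hdist
end

section
/- Let x, y ∈ ℤ, let ∂x be a positive even integer and ∂y a positive odd integer, and set p_x = ∂x/2 − 1 and p_y = (∂y − 1)/2. Define c₁ = (x + p_x, y + p_y), c₂ = (x + p_x + 2, y + p_y), and c₃ = (x + p_x + 2, y + p_y + 2). Let m₁, m₂, m₃, m₄ ∈ ℤ² satisfy m₁ ∈ [x, x + ∂x] × [y, y + ∂y] and ‖m_{j+1} − m_j‖₁ ≤ 1 for j = 1, 2, 3. If ‖c₂ − m₃‖₁ ≤ ‖c₁ − m₂‖₁ and ‖c₃ − m₄‖₁ > ‖c₂ − m₃‖₁, then m₄ ∈ [x + ∂x/2 − 1, x + ∂x + 3] × [y − 3, y + (∂y + 1)/2]. In particular, m₄ lies in an axis-parallel box of width at most ⌈∂x/2⌉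 + 4 and height at most ⌈∂y/2⌉ + 3. -/
/-!
Write `c₁ = (X, Y)`. Moving a probe two steps along an axis changes its distance to a point `m`
by `-2`, `0` or `+2`, according to whether `m` lies beyond, level with, or before the midpoint.
Since the mouse moves at most one step per round, the answer `‖c₂ − m₃‖₁ ≤ ‖c₁ − m₂‖₁` gives
`‖c₂ − m₃‖₁ ≤ ‖c₁ − m₃‖₁ + 1`, which forces `m₃` to lie at or beyond the midpoint `X + 1`, so
`X ≤ m₄.1`. Likewise `‖c₃ − m₄‖₁ > ‖c₂ − m₃‖₁` gives `‖c₂ − m₄‖₁ ≤ ‖c₃ − m₄‖₁`, which forces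
`m₄.2 ≤ Y + 1`. The two remaining sides of the box come from `m₄` being within three steps of `m₁`.
-/

/-- The ℓ1-distance of two points of `ℤ²`. -/
def l1dist (p q : ℤ × ℤ) : ℤ := |p.1 - q.1| + |p.2 - q.2|

theorem l1dist_comm (p q : ℤ × ℤ) : l1dist p q = l1dist q p := by
  simp only [l1dist, abs_sub_comm]

theorem l1dist_triangle (p q r : ℤ × ℤ) : l1dist p r ≤ l1dist p q + l1dist q r := by
  unfold l1dist
  linarith [abs_sub_le p.1 q.1 r.1, abs_sub_le p.2 q.2 r.2]

theorem abs_fst_sub_le_l1dist (p q : ℤ × ℤ) : |p.1 - q.1| ≤ l1dist p q :=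
  le_add_of_nonneg_right (abs_nonneg _)

theorem abs_snd_sub_le_l1dist (p q : ℤ × ℤ) : |p.2 - q.2| ≤ l1dist p q :=
  le_add_of_nonneg_left (abs_nonneg _)

theorem add_one_le_fst_of_l1dist_le (a b : ℤ) (m : ℤ × ℤ)
    (h : l1dist (a + 2, b) m ≤ l1dist (a, b) m + 1) : a + 1 ≤ m.1 := by
  dsimp only [l1dist] at h
  cases abs_cases (a + 2 - m.1) <;> cases abs_cases (a - m.1) <;> omega

theorem snd_le_add_one_of_l1dist_le (a b : ℤ) (m : ℤ × ℤ)
    (h : l1dist (a, b) m ≤ l1dist (a, b + 2) m + 1) : m.2 ≤ b + 1 := by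
  dsimp only [l1dist] at h
  cases abs_cases (b + 2 - m.2) <;> cases abs_cases (b - m.2) <;> omega

theorem grid_shrinking_step_general (x y dx dy : ℤ)
    (hdxe : Even dx)
    (px py : ℤ) (hpx : px = dx / 2 - 1) (hpy : py = (dy - 1) / 2)
    (c₁ c₂ c₃ : ℤ × ℤ)
    (hc₁ : c₁ = (x + px, y + py)) (hc₂ : c₂ = (x + px + 2, y + py))
    (hc₃ : c₃ = (x + px + 2, y + py + 2))
    (m₁ m₂ m₃ m₄ : ℤ × ℤ)
    (hm₁ : m₁.1 ∈ Set.Icc x (x + dx) ∧ m₁.2 ∈ Set.Icc y (y + dy))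
    (h12 : l1dist m₂ m₁ ≤ 1) (h23 : l1dist m₃ m₂ ≤ 1) (h34 : l1dist m₄ m₃ ≤ 1)
    (hb₂ : l1dist c₂ m₃ ≤ l1dist c₁ m₂) (hb₃ : l1dist c₃ m₄ > l1dist c₂ m₃) :
    (m₄.1 ∈ Set.Icc (x + dx / 2 - 1) (x + dx + 3) ∧
      m₄.2 ∈ Set.Icc (y - 3) (y + (dy + 1) / 2)) ∧
    ∃ a b : ℤ, m₄.1 ∈ Set.Icc a (a + (dx / 2 + 4)) ∧
      m₄.2 ∈ Set.Icc b (b + ((dy + 1) / 2 + 3)) := by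
  subst hc₁ hc₂ hc₃
  have hm₃ : x + px + 1 ≤ m₃.1 :=
    add_one_le_fst_of_l1dist_le (x + px) (y + py) m₃ <| hb₂.trans <| by
      linarith [l1dist_triangle (x + px, y + py) m₃ m₂, l1dist_comm m₃ m₂]
  have hm₄ : m₄.2 ≤ y + py + 1 :=
    snd_le_add_one_of_l1dist_le (x + px + 2) (y + py) m₄ <| by
      linarith [l1dist_triangle (x + px + 2, y + py) m₃ m₄, l1dist_comm m₃ m₄]
  have hwalk : l1dist m₄ m₁ ≤ 3 := by
    linarith [l1dist_triangle m₄ m₃ m₁, l1dist_triangle m₃ m₂ m₁]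
  have hx₄ := abs_le.mp ((abs_fst_sub_le_l1dist m₄ m₁).trans hwalk)
  have hy₄ := abs_le.mp ((abs_snd_sub_le_l1dist m₄ m₁).trans hwalk)
  have hx₃₄ := abs_le.mp ((abs_fst_sub_le_l1dist m₄ m₃).trans h34)
  obtain ⟨⟨hx₁, hx₁'⟩, hy₁, hy₁'⟩ := hm₁
  obtain ⟨k, rfl⟩ := hdxe
  simp only [Set.mem_Icc]
  refine ⟨⟨⟨by omega, by omega⟩, by omega, by omega⟩, x + px, y - 3,
    ⟨by omega, by omega⟩, by omega, by omega⟩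

/-- Grid-shrinking step: with `∂x` positive and even, `∂y` positive and odd,
`p_x = ∂x/2 − 1`, `p_y = (∂y − 1)/2`, and the three probes
`c₁ = (x + p_x, y + p_y)`, `c₂ = (x + p_x + 2, y + p_y)`,
`c₃ = (x + p_x + 2, y + p_y + 2)`, if the mouse positions `m₁, m₂, m₃, m₄`
form a unit-speed walk starting in `[x, x + ∂x] × [y, y + ∂y]` and the answers
are `‖c₂ − m₃‖₁ ≤ ‖c₁ − m₂‖₁` and `‖c₃ − m₄‖₁ > ‖c₂ − m₃‖₁`, then
`m₄ ∈ [x + ∂x/2 − 1, x + ∂x + 3] × [y − 3, y + (∂y + 1)/2]`; in particular `m₄`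
lies in a box of width at most `⌈∂x/2⌉ + 4` and height at most `⌈∂y/2⌉ + 3`. -/
theorem grid_shrinking_step (x y dx dy : ℤ)
    (hdx : 0 < dx) (hdxe : Even dx) (hdy : 0 < dy) (hdyo : Odd dy)
    (px py : ℤ) (hpx : px = dx / 2 - 1) (hpy : py = (dy - 1) / 2)
    (c₁ c₂ c₃ : ℤ × ℤ)
    (hc₁ : c₁ = (x + px, y + py)) (hc₂ : c₂ = (x + px + 2, y + py))
    (hc₃ : c₃ = (x + px + 2, y + py + 2))
    (m₁ m₂ m₃ m₄ : ℤ × ℤ)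
    (hm₁ : m₁.1 ∈ Set.Icc x (x + dx) ∧ m₁.2 ∈ Set.Icc y (y + dy))
    (h12 : l1dist m₂ m₁ ≤ 1) (h23 : l1dist m₃ m₂ ≤ 1) (h34 : l1dist m₄ m₃ ≤ 1)
    (hb₂ : l1dist c₂ m₃ ≤ l1dist c₁ m₂) (hb₃ : l1dist c₃ m₄ > l1dist c₂ m₃) :
    (m₄.1 ∈ Set.Icc (x + dx / 2 - 1) (x + dx + 3) ∧
      m₄.2 ∈ Set.Icc (y - 3) (y + (dy + 1) / 2)) ∧
    ∃ a b : ℤ, m₄.1 ∈ Set.Icc a (a + (dx / 2 + 4)) ∧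
      m₄.2 ∈ Set.Icc b (b + ((dy + 1) / 2 + 3)) :=
  grid_shrinking_step_general x y dx dy hdxe px py hpx hpy c₁ c₂ c₃ hc₁ hc₂ hc₃ m₁ m₂ m₃ m₄ hm₁ h12
    h23 h34 hb₂ hb₃
end
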